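/- For any bonding grammar BG there exists a constant K ∈ ℕ such that every hypergraph in the language L(BG) has maximum vertex degree at most K. Consequently, the language of all star graphs (for each n, one center vertex connected by an edge to each of n leaf vertices) is not generated by any bonding grammar. -/

import Mathlib

/-! ## Hypergraphs (over a label alphabet `Λ`), bonding, breaking bonds,
bonding grammars, following "Bonding Grammars" (Pshenitsyn). -/

structure HGraph (Λ : Type) where
  V : Finset ℕ
  E : Finset ℕ
  att : ℕ → List ℕ
  lab : ℕ → Λ

namespace HGraph

variable {Λ : Type}

/-- Attachment vertices lie in `V` and attachment lengths agree with types. -/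
def WellFormed (typ : Λ → ℕ) (H : HGraph Λ) : Prop :=
  (∀ e ∈ H.E, ∀ v ∈ H.att e, v ∈ H.V) ∧
  (∀ e ∈ H.E, (H.att e).length = typ (H.lab e))

def Adj (H : HGraph Λ) (u v : ℕ) : Prop :=
  ∃ e ∈ H.E, u ∈ H.att e ∧ v ∈ H.att e

/-- There is a path between `u` and `v` in `H`. -/
def HasPath (H : HGraph Λ) (u v : ℕ) : Prop :=
  Relation.ReflTransGen H.Adj u v

def Connected (H : HGraph Λ) : Prop :=
  ∀ u ∈ H.V, ∀ v ∈ H.V, H.HasPath u v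

/-- The degree of a vertex: the number of pairs `(e, i)` with
`att e ( i ) = v`, i.e. occurrences of `v` in attachment sequences. -/
def degree (H : HGraph Λ) (v : ℕ) : ℕ :=
  ∑ e ∈ H.E, (H.att e).count v

def degreeSet (H : HGraph Λ) : Set ℕ :=
  {d | ∃ v ∈ H.V, H.degree v = d}

def Isomorphic (H G : HGraph Λ) : Prop :=
  ∃ f g : ℕ → ℕ,
    Set.BijOn f ↑H.V ↑G.V ∧ Set.BijOn g ↑H.E ↑G.E ∧
    ∀ e ∈ H.E, G.att (g e) = (H.att e).map f ∧ G.lab (g e) = H.lab e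

end HGraph

/-- A single bonding step: two distinct hyperedges `e₁, e₂` whose labels can be
bonded are merged into a single new hyperedge `e'` with concatenated
attachment sequence and label `lab e₁ ⊗ lab e₂`. -/
def BondingStep {Λ : Type} (bond : Λ → Λ → Option Λ) (H H' : HGraph Λ) : Prop :=
  ∃ e₁ e₂ e' t,
    e₁ ∈ H.E ∧ e₂ ∈ H.E ∧ e₁ ≠ e₂ ∧ e' ∉ H.E ∧
    bond (H.lab e₁) (H.lab e₂) = some t ∧
    H'.V = H.V ∧
    H'.E = (H.E \ {e₁, e₂}) ∪ {e'} ∧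
    (∀ e ∈ H.E \ {e₁, e₂}, H'.att e = H.att e ∧ H'.lab e = H.lab e) ∧
    H'.att e' = H.att e₁ ++ H.att e₂ ∧
    H'.lab e' = t

/-- Breaking the bond `e'` (whose label is `A₁ ⊗ A₂`) of `H'`, introducing the
fresh hyperedges `e₁, e₂`, yields `H`. -/
def BreakBondAt {Λ : Type} (typ : Λ → ℕ) (bond : Λ → Λ → Option Λ)
    (H' H : HGraph Λ) (e' e₁ e₂ : ℕ) : Prop :=
  ∃ A₁ A₂,
    e' ∈ H'.E ∧ e₁ ∉ H'.E ∧ e₂ ∉ H'.E ∧ e₁ ≠ e₂ ∧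
    bond A₁ A₂ = some (H'.lab e') ∧
    H.V = H'.V ∧
    H.E = (H'.E \ {e'}) ∪ {e₁, e₂} ∧
    (∀ e ∈ H'.E \ {e'}, H.att e = H'.att e ∧ H.lab e = H'.lab e) ∧
    H.att e₁ = (H'.att e').take (typ A₁) ∧
    H.att e₂ = (H'.att e').drop (typ A₁) ∧
    H.lab e₁ = A₁ ∧ H.lab e₂ = A₂

def BreakBond {Λ : Type} (typ : Λ → ℕ) (bond : Λ → Λ → Option Λ)
    (H' H : HGraph Λ) : Prop :=
  ∃ e' e₁ e₂, BreakBondAt typ bond H' H e' e₁ e₂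

/-- `BreaksTo typ bond H l F`: starting from `H` and successively breaking the
bonds listed in `l` yields `F`. -/
def BreaksTo {Λ : Type} (typ : Λ → ℕ) (bond : Λ → Λ → Option Λ) :
    HGraph Λ → List ℕ → HGraph Λ → Prop
  | H, [], F => H = F
  | H, e :: l, F => ∃ H₁ e₁ e₂, BreakBondAt typ bond H H₁ e e₁ e₂ ∧ BreaksTo typ bond H₁ l F

/-- `H` is a disjoint union of copies of hypergraphs from `Zs`
(this plays the role of `m · Z`). -/
def IsUnionOfCopies {Λ : Type} (Zs : Set (HGraph Λ)) (H : HGraph Λ) : Prop :=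
  ∃ (n : ℕ) (cV cE : ℕ → ℕ),
    (∀ v ∈ H.V, cV v < n) ∧ (∀ e ∈ H.E, cE e < n) ∧
    (∀ e ∈ H.E, ∀ v ∈ H.att e, v ∈ H.V) ∧
    (∀ e ∈ H.E, ∀ v ∈ H.att e, cV v = cE e) ∧
    ∀ i < n, ∃ Z0 ∈ Zs, HGraph.Isomorphic
      ⟨H.V.filter (fun v => cV v = i), H.E.filter (fun e => cE e = i), H.att, H.lab⟩ Z0

/-- `C` is a connected component of `H`. -/
def IsComponent {Λ : Type} (H C : HGraph Λ) : Prop :=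
  C.V ⊆ H.V ∧ C.att = H.att ∧ C.lab = H.lab ∧ C.V.Nonempty ∧
  (∀ u ∈ C.V, ∀ v ∈ H.V, (H.HasPath u v ↔ v ∈ C.V)) ∧
  ∀ e, e ∈ C.E ↔ (e ∈ H.E ∧ ∃ v ∈ H.att e, v ∈ C.V)

/-- Disjoint union of two hypergraphs (via an even/odd renaming). -/
def hsum {Λ : Type} (H K : HGraph Λ) : HGraph Λ :=
  ⟨H.V.image (fun v => 2 * v) ∪ K.V.image (fun v => 2 * v + 1),
   H.E.image (fun e => 2 * e) ∪ K.E.image (fun e => 2 * e + 1),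
   fun e => if e % 2 = 0 then (H.att (e / 2)).map (fun v => 2 * v)
            else (K.att (e / 2)).map (fun v => 2 * v + 1),
   fun e => if e % 2 = 0 then H.lab (e / 2) else K.lab (e / 2)⟩

/-- A bonding grammar: typed labels, nonterminal and terminal alphabets, a
partial bond function, and a tuple `Z` of start hypergraphs. -/
structure BondingGrammar (Λ : Type) where
  typ : Λ → ℕ
  N : Set Λ
  T : Set Λ
  bond : Λ → Λ → Option Λ
  k : ℕ
  Z : Fin k → HGraph Λ

namespace BondingGrammar

variable {Λ : Type}

/-- Side conditions from the definition of a bonding grammar: `N` and `T` are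
disjoint, the start hypergraphs are connected and well-formed, and the bond
function is a partial injective function `N × N ⇀ T` adding the types. -/
def WellFormed (G : BondingGrammar Λ) : Prop :=
  Disjoint G.N G.T ∧
  (∀ i, (G.Z i).Connected ∧ (G.Z i).WellFormed G.typ) ∧
  (∀ A₁ A₂ t, G.bond A₁ A₂ = some t →
    A₁ ∈ G.N ∧ A₂ ∈ G.N ∧ t ∈ G.T ∧ G.typ t = G.typ A₁ + G.typ A₂) ∧
  (∀ A₁ A₂ B₁ B₂ t, G.bond A₁ A₂ = some t → G.bond B₁ B₂ = some t →
    A₁ = B₁ ∧ A₂ = B₂)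

def ZSet (G : BondingGrammar Λ) : Set (HGraph Λ) :=
  {Z0 | ∃ i, Z0 = G.Z i}

/-- `G` generates `H` if some `m · Z` derives `H` by bonding steps. -/
def Generates (G : BondingGrammar Λ) (H : HGraph Λ) : Prop :=
  ∃ H₀, IsUnionOfCopies G.ZSet H₀ ∧
    Relation.ReflTransGen (BondingStep G.bond) H₀ H

/-- The language of `G`: generated hypergraphs all of whose labels are terminal. -/
def Lang (G : BondingGrammar Λ) : Set (HGraph Λ) :=
  {H | G.Generates H ∧ ∀ e ∈ H.E, H.lab e ∈ G.T}

end BondingGrammar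

/-! Labels `I, O` (nonterminal, type 1) and `b` (terminal, type 2). -/

inductive Lab : Type
  | I | O | b
deriving DecidableEq

def typLab : Lab → ℕ
  | .I => 1 | .O => 1 | .b => 2

def bondLab : Lab → Lab → Option Lab
  | .O, .I => some .b
  | _, _ => none

/-- The hypergraph `&(I^j, O^(k-j))`: one vertex with `j` hyperedges labelled
`I` and `k - j` hyperedges labelled `O` attached to it. -/
def Zreg (k j : ℕ) : HGraph Lab :=
  ⟨{0}, Finset.range k, fun _ => [0], fun e => if e < j then Lab.I else Lab.O⟩

/-- The bonding grammar `BG_reg^(k)` with start tuple `Z_0^(k), …, Z_k^(k)`. -/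
def BGreg (k : ℕ) : BondingGrammar Lab :=
  { typ := typLab, N := {Lab.I, Lab.O}, T := {Lab.b}, bond := bondLab,
    k := k + 1, Z := fun j => Zreg k (j : ℕ) }

/-- The star graph with one center connected by a `b`-labelled edge to each of
`n` leaves. -/
def starGraph (n : ℕ) : HGraph Lab :=
  ⟨Finset.range (n + 1), Finset.range n, fun e => [0, e + 1], fun _ => Lab.b⟩

/-! Bonding steps only merge hyperedges, so they keep the vertex set and every vertex degree.
A generated hypergraph therefore has the degrees of the disjoint union of start hypergraphs
it was derived from, and those are degrees of vertices of the finitely many `G.Z i`.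
The star with more leaves than this bound cannot be generated. -/

theorem List.count_map_of_injOn {α β : Type*} [DecidableEq α] [DecidableEq β] {f : α → β}
    {S : Set α} (hf : S.InjOn f) {v : α} (hv : v ∈ S) {l : List α} (hl : ∀ a ∈ l, a ∈ S) :
    (l.map f).count (f v) = l.count v := by
  induction l with
  | nil => rfl
  | cons a l ih =>
    rw [List.map_cons, List.count_cons, List.count_cons,
      ih fun b hb => hl b (List.mem_cons_of_mem a hb)]
    simp only [beq_iff_eq, hf.eq_iff (hl a List.mem_cons_self) hv]

namespace HGraph

variable {Λ : Type}

theorem Isomorphic.refl (H : HGraph Λ) : H.Isomorphic H :=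
  ⟨id, id, Set.bijOn_id _, Set.bijOn_id _, fun _ _ => ⟨(List.map_id _).symm, rfl⟩⟩

theorem Isomorphic.exists_degree_eq {H K : HGraph Λ} (h : H.Isomorphic K)
    (hH : ∀ e ∈ H.E, ∀ u ∈ H.att e, u ∈ H.V) {v : ℕ} (hv : v ∈ H.V) :
    ∃ w ∈ K.V, K.degree w = H.degree v := by
  obtain ⟨f, g, hf, hg, hatt⟩ := h
  refine ⟨f v, hf.mapsTo hv, (Finset.sum_nbij g hg.mapsTo hg.injOn hg.surjOn ?_).symm⟩
  intro e he
  rw [(hatt e he).1, List.count_map_of_injOn hf.injOn hv (hH e he)]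

theorem degree_filter_edges (H : HGraph Λ) (V' : Finset ℕ) (p : ℕ → Prop) [DecidablePred p]
    {v : ℕ} (hp : ∀ e ∈ H.E, v ∈ H.att e → p e) :
    (⟨V', H.E.filter p, H.att, H.lab⟩ : HGraph Λ).degree v = H.degree v :=
  Finset.sum_filter_of_ne fun e he hcount =>
    hp e he (List.count_pos_iff.1 (Nat.pos_of_ne_zero hcount))

end HGraph

section Bonding

variable {Λ : Type} {bond : Λ → Λ → Option Λ} {H H' : HGraph Λ}

theorem BondingStep.V_eq (h : BondingStep bond H H') : H'.V = H.V := by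
  obtain ⟨-, -, -, -, -, -, -, -, -, hV, -⟩ := h
  exact hV

theorem BondingStep.degree_eq (h : BondingStep bond H H') : H'.degree = H.degree := by
  obtain ⟨e₁, e₂, e', t, he₁, he₂, hne, he', -, -, hE, hatt, hatt', -⟩ := h
  have hpair : ({e₁, e₂} : Finset ℕ) ⊆ H.E := Finset.insert_subset he₁ (by simpa using he₂)
  have hfresh : Disjoint (H.E \ {e₁, e₂}) {e'} :=
    Finset.disjoint_singleton_right.2 fun h => he' (Finset.mem_sdiff.1 h).1
  funext v
  unfold HGraph.degree
  rw [hE, Finset.sum_union hfresh, Finset.sum_singleton, hatt',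
    Finset.sum_congr rfl fun e he => by rw [(hatt e he).1],
    List.count_append, ← Finset.sum_sdiff hpair, Finset.sum_pair hne]

theorem V_eq_and_degree_eq_of_reflTransGen_bondingStep
    (h : Relation.ReflTransGen (BondingStep bond) H H') : H'.V = H.V ∧ H'.degree = H.degree := by
  induction h with
  | refl => exact ⟨rfl, rfl⟩
  | tail _ hstep ih => exact ⟨hstep.V_eq.trans ih.1, hstep.degree_eq.trans ih.2⟩

end Bonding

theorem IsUnionOfCopies.exists_degree_eq {Λ : Type} {Zs : Set (HGraph Λ)} {H : HGraph Λ}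
    (h : IsUnionOfCopies Zs H) {v : ℕ} (hv : v ∈ H.V) :
    ∃ Z ∈ Zs, ∃ w ∈ Z.V, Z.degree w = H.degree v := by
  obtain ⟨n, cV, cE, hcV, -, hattV, hcomp, hcopies⟩ := h
  obtain ⟨Z, hZ, hiso⟩ := hcopies (cV v) (hcV v hv)
  have hcopy_closed : ∀ e ∈ H.E.filter (fun e => cE e = cV v), ∀ u ∈ H.att e,
      u ∈ H.V.filter (fun u => cV u = cV v) := by
    intro e he u hu
    rw [Finset.mem_filter] at he ⊢
    exact ⟨hattV e he.1 u hu, (hcomp e he.1 u hu).trans he.2⟩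
  obtain ⟨w, hw, hdeg⟩ := hiso.exists_degree_eq hcopy_closed (Finset.mem_filter.2 ⟨hv, rfl⟩)
  exact ⟨Z, hZ, w, hw, hdeg.trans
    (H.degree_filter_edges _ _ fun e he hve => (hcomp e he v hve).symm)⟩

namespace BondingGrammar

variable {Λ : Type}

def maxStartDegree (G : BondingGrammar Λ) : ℕ :=
  Finset.univ.sup fun i => (G.Z i).V.sup (G.Z i).degree

theorem degree_le_maxStartDegree {G : BondingGrammar Λ} {H : HGraph Λ} (hH : G.Generates H)
    {v : ℕ} (hv : v ∈ H.V) : H.degree v ≤ G.maxStartDegree := by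
  obtain ⟨H₀, hunion, hderiv⟩ := hH
  obtain ⟨hV, hdeg⟩ := V_eq_and_degree_eq_of_reflTransGen_bondingStep hderiv
  obtain ⟨-, ⟨i, rfl⟩, w, hw, hw_deg⟩ := hunion.exists_degree_eq (hV ▸ hv)
  calc H.degree v = (G.Z i).degree w := by rw [hdeg, hw_deg]
    _ ≤ (G.Z i).V.sup (G.Z i).degree := Finset.le_sup hw
    _ ≤ G.maxStartDegree :=
      Finset.le_sup (f := fun i => (G.Z i).V.sup (G.Z i).degree) (Finset.mem_univ i)

end BondingGrammar

theorem zero_mem_starGraph_V (n : ℕ) : 0 ∈ (starGraph n).V := by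
  simp [starGraph]

theorem starGraph_degree_zero (n : ℕ) : (starGraph n).degree 0 = n := by
  simp [starGraph, HGraph.degree]

/-- every bonding grammar language has bounded maximum degree;
consequently the language of all star graphs is not generated by any
bonding grammar. -/
theorem bounded_degree_and_no_stars :
    (∀ (Λ : Type) (G : BondingGrammar Λ), ∃ K : ℕ,
      ∀ H ∈ BondingGrammar.Lang G, ∀ v ∈ H.V, H.degree v ≤ K) ∧
    (∀ G : BondingGrammar Lab,
      BondingGrammar.Lang G ≠ {H | ∃ n, H.Isomorphic (starGraph n)}) := by
  refine ⟨fun Λ G => ⟨G.maxStartDegree, fun H hH v hv =>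
    BondingGrammar.degree_le_maxStartDegree hH.1 hv⟩, fun G hG => ?_⟩
  have hstar : starGraph (G.maxStartDegree + 1) ∈ G.Lang :=
    hG ▸ ⟨_, HGraph.Isomorphic.refl _⟩
  have hbound := BondingGrammar.degree_le_maxStartDegree hstar.1 (zero_mem_starGraph_V _)
  rw [starGraph_degree_zero] at hbound
  omega
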